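/- arXiv:1210.5777 — 4 statements merged into one kernel-verified Lean document; each statement's English description precedes it below -/
import Mathlib

section
/- Let T be a tree with n vertices, maximal degree d_T ≥ 2, and let b_T be its bottleneck number (for the unique routing along tree paths). Then b_T ≥ (n−1)²/d_T². -/
open Finset SimpleGraph

/-!
Deleting the edge of a dart `d` splits the tree into two sides, and every route from the tail side
to the head side crosses `d`; so if the head side has `k` vertices, `b_T ≥ k (n - k)`.
At a centroid `v` every branch has at most `n / 2` vertices, and the `deg v ≤ d_T` branches cover
the other `n - 1` vertices, so the largest branch has `(n - 1) / d_T ≤ k ≤ n / 2`, whence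
`b_T ≥ k (n - k) ≥ k² ≥ (n - 1)² / d_T²`.
-/

/-- The bottleneck number of a routing `Γ`. -/
def bottleneck {V : Type*} [Fintype V] [DecidableEq V] (G : SimpleGraph V)
    [DecidableRel G.Adj] (Γ : ∀ x y : V, G.Walk x y) : ℕ :=
  Finset.univ.sup fun e : G.Dart =>
    (Finset.univ.filter fun p : V × V => e ∈ (Γ p.1 p.2).darts).card

section Routing

variable {V : Type*} {T : SimpleGraph V} {Γ : ∀ x y : V, T.Walk x y}

theorem eq_route_of_isPath (hT : T.IsAcyclic) (hΓ : ∀ x y, (Γ x y).IsPath) {x y : V}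
    (p : T.Walk x y) (hp : p.IsPath) : p = Γ x y :=
  congrArg Subtype.val ((hT.subsingleton_path x y).elim ⟨p, hp⟩ ⟨Γ x y, hΓ x y⟩)

variable [Fintype V] [DecidableEq V]

/-- For a routing along the paths of a forest, `farSide Γ d` is the vertex set of the component
of `T` minus the edge of `d` that contains `d.snd`. -/
def farSide (Γ : ∀ x y : V, T.Walk x y) (d : T.Dart) : Finset V :=
  {x | d.fst ∉ (Γ x d.snd).support}

theorem fst_notMem_farSide (d : T.Dart) : d.fst ∉ farSide Γ d := by
  simp [farSide]

variable (hT : T.IsAcyclic) (hΓ : ∀ x y, (Γ x y).IsPath)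
include hT hΓ

theorem mem_farSide_iff_snd_mem_support {d : T.Dart} {x : V} :
    x ∈ farSide Γ d ↔ d.snd ∈ (Γ x d.fst).support := by
  rw [farSide, mem_filter, and_iff_right (mem_univ x)]
  exact ⟨hT.mem_support_of_ne_mem_support_of_adj_of_isPath (hΓ _ _) (hΓ _ _) d.adj,
    hT.ne_mem_support_of_support_of_adj_of_isPath (hΓ _ _) (hΓ _ _) d.adj⟩

theorem mem_farSide_symm_iff {d : T.Dart} {x : V} :
    x ∈ farSide Γ d.symm ↔ x ∉ farSide Γ d := by
  rw [mem_farSide_iff_snd_mem_support hT hΓ]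
  simp [farSide, Dart.symm]

theorem snd_mem_farSide (d : T.Dart) : d.snd ∈ farSide Γ d := by
  simpa [mem_farSide_symm_iff hT hΓ] using fst_notMem_farSide (Γ := Γ) d.symm

theorem card_farSide_symm (d : T.Dart) :
    #(farSide Γ d.symm) = Fintype.card V - #(farSide Γ d) := by
  rw [← card_compl]
  congr 1
  ext x
  rw [mem_compl, mem_farSide_symm_iff hT hΓ]

theorem mem_farSide_of_mem_support {d : T.Dart} {x w : V} (hx : x ∈ farSide Γ d)
    (hw : w ∈ (Γ x d.snd).support) : w ∈ farSide Γ d := by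
  have hroute : (Γ x d.snd).dropUntil w hw = Γ w d.snd :=
    eq_route_of_isPath hT hΓ _ ((hΓ x d.snd).dropUntil hw)
  simp only [farSide, mem_filter, mem_univ, true_and] at hx ⊢
  rw [← hroute]
  exact fun h => hx ((Γ x d.snd).support_dropUntil_subset_support hw h)

theorem dart_mem_route_of_mem_farSide {d : T.Dart} {x y : V} (hx : x ∈ farSide Γ d.symm)
    (hy : y ∈ farSide Γ d) : d ∈ (Γ x y).darts := by
  let W : T.Walk x y := (Γ x d.fst).append (.cons d.adj (Γ y d.snd).reverse)
  have hW : W.IsPath := by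
    rw [Walk.isPath_def, Walk.support_append, Walk.support_cons, List.tail_cons,
      Walk.support_reverse, List.nodup_append]
    refine ⟨(hΓ x d.fst).support_nodup, List.nodup_reverse.2 (hΓ y d.snd).support_nodup, ?_⟩
    intro w hwx w' hwy hww'
    subst hww'
    have hw₁ : w ∈ farSide Γ d.symm := mem_farSide_of_mem_support hT hΓ hx hwx
    have hw₂ : w ∈ farSide Γ d := mem_farSide_of_mem_support hT hΓ hy (List.mem_reverse.1 hwy)
    exact (mem_farSide_symm_iff hT hΓ).1 hw₁ hw₂
  rw [← eq_route_of_isPath hT hΓ W hW]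
  simp [W, Walk.darts_append]

theorem disjoint_farSide_of_fst_eq {d e : T.Dart} (hde : d ≠ e) (hfst : d.fst = e.fst) :
    Disjoint (farSide Γ d) (farSide Γ e) := by
  refine disjoint_left.2 fun x hd he => hde ?_
  rw [mem_farSide_iff_snd_mem_support hT hΓ] at hd he
  rw [← hfst] at he
  have hsnd : d.snd = e.snd :=
    (hT.eq_penultimate_of_adj_end (hΓ x d.fst) d.adj hd).trans
      (hT.eq_penultimate_of_adj_end (hΓ x d.fst) (hfst ▸ e.adj) he).symm
  exact Dart.ext _ _ (Prod.ext hfst hsnd)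

theorem farSide_ssubset_farSide {d e : T.Dart} (hde : d.snd = e.fst) (he : e ≠ d.symm) :
    farSide Γ e ⊂ farSide Γ d := by
  have hsub : farSide Γ e ⊆ farSide Γ d := fun x hx => by
    by_contra hxd
    exact disjoint_left.1 (disjoint_farSide_of_fst_eq hT hΓ he (by simp [hde])) hx
      ((mem_farSide_symm_iff hT hΓ).2 hxd)
  rw [ssubset_iff_of_subset hsub]
  exact ⟨d.snd, snd_mem_farSide hT hΓ d, hde ▸ fst_notMem_farSide e⟩

theorem exists_fst_eq_mem_farSide {v x : V} (hxv : x ≠ v) :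
    ∃ d : T.Dart, d.fst = v ∧ x ∈ farSide Γ d := by
  have hp := hΓ v x
  cases hroute : Γ v x with
  | nil => exact absurd rfl hxv
  | @cons _ w _ hvw q =>
    rw [hroute, Walk.cons_isPath_iff] at hp
    refine ⟨⟨(v, w), hvw⟩, rfl, ?_⟩
    simpa [farSide, ← eq_route_of_isPath hT hΓ q.reverse hp.1.reverse] using hp.2

variable [DecidableRel T.Adj]

theorem card_mul_card_farSide_le_bottleneck (d : T.Dart) :
    #(farSide Γ d.symm) * #(farSide Γ d) ≤ bottleneck T Γ := by
  rw [← card_product]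
  calc #(farSide Γ d.symm ×ˢ farSide Γ d)
      ≤ #{p : V × V | d ∈ (Γ p.1 p.2).darts} := card_le_card fun p hp => by
        rw [mem_product] at hp
        simpa using dart_mem_route_of_mem_farSide hT hΓ hp.1 hp.2
    _ ≤ bottleneck T Γ :=
        le_sup (f := fun e : T.Dart => #{p : V × V | e ∈ (Γ p.1 p.2).darts}) (mem_univ d)

theorem card_sub_one_le_degree_mul {v : V} {k : ℕ}
    (hk : ∀ d : T.Dart, d.fst = v → #(farSide Γ d) ≤ k) :
    Fintype.card V - 1 ≤ T.degree v * k :=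
  calc Fintype.card V - 1 = #(univ.erase v) := by rw [card_erase_of_mem (mem_univ v), card_univ]
    _ ≤ #(({d : T.Dart | d.fst = v} : Finset T.Dart).biUnion (farSide Γ)) :=
      card_le_card fun x hx => by
        obtain ⟨d, hd, hxd⟩ := exists_fst_eq_mem_farSide hT hΓ (ne_of_mem_erase hx)
        exact mem_biUnion.2 ⟨d, mem_filter.2 ⟨mem_univ d, hd⟩, hxd⟩
    _ ≤ #{d : T.Dart | d.fst = v} * k :=
        card_biUnion_le_card_mul _ _ _ fun d hd => hk d (mem_filter.1 hd).2
    _ = T.degree v * k := by rw [dart_fst_fiber_card_eq_degree]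

theorem exists_forall_two_mul_card_farSide_le [Nonempty V] :
    ∃ v : V, ∀ d : T.Dart, d.fst = v → 2 * #(farSide Γ d) ≤ Fintype.card V := by
  let g : V → ℕ := fun v => ({d : T.Dart | d.fst = v} : Finset T.Dart).sup fun d => #(farSide Γ d)
  obtain ⟨v, -, hv⟩ := exists_min_image univ g univ_nonempty
  refine ⟨v, fun d hd => ?_⟩
  by_contra! hlarge
  have hdv : #(farSide Γ d) ≤ g v := le_sup (f := fun d => #(farSide Γ d)) (by simp [hd])
  -- moving from `v` across `d` would decrease `g`
  have hlt : g d.snd < g v := by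
    refine (Finset.sup_lt_iff (by simp only [bot_eq_zero']; omega)).2 fun e he => ?_
    rcases eq_or_ne e d.symm with rfl | hed
    · rw [card_farSide_symm hT hΓ]
      omega
    · exact (card_lt_card (farSide_ssubset_farSide hT hΓ (mem_filter.1 he).2.symm hed)).trans_le hdv
  exact (hv d.snd (mem_univ _)).not_gt hlt

theorem sub_one_sq_le_maxDegree_sq_mul_bottleneck [Nonempty V] :
    (Fintype.card V - 1) ^ 2 ≤ T.maxDegree ^ 2 * bottleneck T Γ := by
  obtain ⟨v, hv⟩ := exists_forall_two_mul_card_farSide_le hT hΓ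
  set D : Finset T.Dart := {d : T.Dart | d.fst = v}
  set k := D.sup fun d => #(farSide Γ d)
  have hcover : Fintype.card V - 1 ≤ T.maxDegree * k :=
    (card_sub_one_le_degree_mul hT hΓ fun d hd =>
      le_sup (f := fun d => #(farSide Γ d)) (by simp [D, hd])).trans
      (Nat.mul_le_mul_right k (T.degree_le_maxDegree v))
  rcases D.eq_empty_or_nonempty with hD | hD
  · have hk : k = 0 := by simp [k, hD]
    rw [hk, mul_zero, Nat.le_zero] at hcover
    simp [hcover]
  obtain ⟨d, hdD, hdk⟩ := exists_mem_eq_sup D hD fun d => #(farSide Γ d)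
  replace hdk : k = #(farSide Γ d) := hdk
  have hhalf : 2 * k ≤ Fintype.card V := hdk ▸ hv d (mem_filter.1 hdD).2
  have hload := card_mul_card_farSide_le_bottleneck hT hΓ d
  rw [card_farSide_symm hT hΓ, ← hdk] at hload
  calc (Fintype.card V - 1) ^ 2 ≤ (T.maxDegree * k) ^ 2 := Nat.pow_le_pow_left hcover 2
    _ = T.maxDegree ^ 2 * (k * k) := by ring
    _ ≤ T.maxDegree ^ 2 * ((Fintype.card V - k) * k) := by gcongr; omega
    _ ≤ T.maxDegree ^ 2 * bottleneck T Γ := by gcongr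

end Routing

theorem stmt7_general {V : Type*} [Fintype V] [DecidableEq V] (T : SimpleGraph V)
    [DecidableRel T.Adj] (htree : T.IsTree)
    (Γ : ∀ x y : V, T.Walk x y) (hpath : ∀ x y, (Γ x y).IsPath) :
    ((Fintype.card V - 1 : ℚ)) ^ 2 / (T.maxDegree : ℚ) ^ 2 ≤ bottleneck T Γ := by
  have : Nonempty V := htree.connected.nonempty
  have hbound := sub_one_sq_le_maxDegree_sq_mul_bottleneck htree.isAcyclic hpath
  refine div_le_of_le_mul₀ (by positivity) (by positivity) ?_
  rw [← Nat.cast_pred Fintype.card_pos, mul_comm]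
  exact_mod_cast hbound

/-- Let `T` be a tree with `n` vertices, maximal degree
`d_T ≥ 2`, and let `b_T` be its bottleneck number for the unique routing
along tree paths.  Then `b_T ≥ (n−1)²/d_T²`. -/
theorem stmt7 {V : Type*} [Fintype V] [DecidableEq V] (T : SimpleGraph V)
    [DecidableRel T.Adj] (htree : T.IsTree) (hdeg : 2 ≤ T.maxDegree)
    (Γ : ∀ x y : V, T.Walk x y) (hpath : ∀ x y, (Γ x y).IsPath) :
    ((Fintype.card V - 1 : ℚ)) ^ 2 / (T.maxDegree : ℚ) ^ 2 ≤ bottleneck T Γ :=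
  stmt7_general T htree Γ hpath
end

section
/- If G is a tree on n > 2 vertices (so |E| = n−1 and maximal degree d ≥ 2), then for the unique routing along the tree, d²b > γ*|E|. -/
/-!
Cut the longest routed path, of length `L = γ*`, at its middle edge `uv`. Since `G` is a tree,
deleting `uv` splits the vertices into the side `A` of `u` and its complement, each containing at
least `L / 2` vertices of the path, and every routed path from `A` to `Aᶜ` crosses the dart
`(u, v)`. Hence `4b ≥ 4|A||Aᶜ| ≥ L(|A| + |Aᶜ|) = L(|E| + 1) > L|E|`, and `d² ≥ 4` because a tree
on more than two vertices has a vertex of degree at least two.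
-/

open Finset SimpleGraph

/-- The maximal path length `γ*` of a routing `Γ`. -/
def maxLen {V : Type*} [Fintype V] (G : SimpleGraph V)
    (Γ : ∀ x y : V, G.Walk x y) : ℕ :=
  Finset.univ.sup fun p : V × V => (Γ p.1 p.2).length

namespace SimpleGraph

variable {V : Type*} {G : SimpleGraph V}

lemma Walk.exists_eq_append_cons {x y : V} (p : G.Walk x y) {j : ℕ} (hj : j < p.length) :
    ∃ (u v : V) (q : G.Walk x u) (h : G.Adj u v) (r : G.Walk v y),
      p = q.append (cons h r) ∧ q.length = j := by
  induction p generalizing j with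
  | nil => simp at hj
  | @cons a b c h p ih =>
    cases j with
    | zero => exact ⟨a, b, nil, h, p, rfl, rfl⟩
    | succ j =>
      obtain ⟨u, v, q, h', r, rfl, rfl⟩ := ih (j := j) (by simpa using hj)
      exact ⟨u, v, cons h q, h', r, rfl, rfl⟩

lemma Dart.eq_of_reachable_deleteEdges {u v : V} (huv : G.Adj u v) (d : G.Dart)
    (hfst : (G.deleteEdges {s(u, v)}).Reachable u d.fst)
    (hsnd : ¬ (G.deleteEdges {s(u, v)}).Reachable u d.snd) : d = ⟨(u, v), huv⟩ := by
  obtain ⟨⟨a, b⟩, hab⟩ := d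
  by_cases he : s(a, b) = s(u, v)
  · rcases Sym2.eq_iff.mp he with ⟨rfl, rfl⟩ | ⟨rfl, rfl⟩
    · rfl
    · exact absurd .rfl hsnd
  · exact absurd (hfst.trans (deleteEdges_adj.mpr ⟨hab, he⟩).reachable) hsnd

lemma IsAcyclic.exists_cut_of_isPath [Fintype V] [DecidableEq V] (hG : G.IsAcyclic)
    {x y u v : V} {q : G.Walk x u} {huv : G.Adj u v} {r : G.Walk v y}
    (hp : (q.append (.cons huv r)).IsPath) :
    ∃ A : Finset V, q.length < #A ∧ r.length < #Aᶜ ∧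
      ∀ d : G.Dart, d.fst ∈ A → d.snd ∉ A → d = ⟨(u, v), huv⟩ := by
  classical
  set H := G.deleteEdges {s(u, v)}
  have hbridge : ¬ H.Reachable u v := isAcyclic_iff_forall_adj_isBridge.mp hG huv
  obtain ⟨hq, hr⟩ : s(u, v) ∉ q.edges ∧ s(u, v) ∉ r.edges := by
    have := hp.edges_nodup
    simp only [Walk.edges_append, Walk.edges_cons, List.nodup_append, List.nodup_cons] at this
    exact ⟨fun he => this.2.2 _ he _ List.mem_cons_self rfl, this.2.1.1⟩
  have hqA : ∀ w ∈ q.support, H.Reachable u w := fun w hw =>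
    (reachable_deleteEdges_iff_exists_walk.mpr
      ⟨q.dropUntil w hw, fun he => hq (q.edges_dropUntil_subset_edges hw he)⟩).symm
  have hrA : ∀ w ∈ r.support, ¬ H.Reachable u w := fun w hw huw =>
    hbridge (huw.trans (reachable_deleteEdges_iff_exists_walk.mpr
      ⟨r.takeUntil w hw, fun he => hr (r.edges_takeUntil_subset_edges hw he)⟩).symm)
  refine ⟨univ.filter (H.Reachable u), ?_, ?_,
    fun d hfst hsnd => Dart.eq_of_reachable_deleteEdges huv d (by simpa using hfst)
      (by simpa using hsnd)⟩
  · calc q.length < #q.support.toFinset := by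
          rw [List.toFinset_card_of_nodup hp.of_append_left.support_nodup, Walk.length_support]
          omega
      _ ≤ _ := card_le_card fun w hw => by simpa using hqA w (List.mem_toFinset.mp hw)
  · calc r.length < #r.support.toFinset := by
          rw [List.toFinset_card_of_nodup hp.of_append_right.of_cons.support_nodup,
            Walk.length_support]
          omega
      _ ≤ _ := card_le_card fun w hw => by simpa using hrA w (List.mem_toFinset.mp hw)

lemma IsTree.two_le_maxDegree [Fintype V] [DecidableRel G.Adj] (hG : G.IsTree)
    (hn : 2 < Fintype.card V) : 2 ≤ G.maxDegree := by
  by_contra! hlt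
  have hdeg : ∑ w, G.degree w ≤ ∑ _w : V, 1 :=
    sum_le_sum fun w _ => Nat.le_of_lt_succ ((G.degree_le_maxDegree w).trans_lt hlt)
  rw [sum_degrees_eq_twice_card_edges, sum_const, card_univ, smul_eq_mul, mul_one] at hdeg
  have := hG.card_edgeFinset
  omega

end SimpleGraph

section Routing

variable {V : Type*} [Fintype V] {G : SimpleGraph V}

lemma length_le_maxLen (Γ : ∀ x y : V, G.Walk x y) (x y : V) : (Γ x y).length ≤ maxLen G Γ :=
  le_sup (f := fun p : V × V => (Γ p.1 p.2).length) (mem_univ (x, y))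

lemma exists_length_eq_maxLen [Nonempty V] (Γ : ∀ x y : V, G.Walk x y) :
    ∃ x y, (Γ x y).length = maxLen G Γ := by
  obtain ⟨⟨x, y⟩, -, h⟩ :=
    exists_mem_eq_sup univ univ_nonempty fun p : V × V => (Γ p.1 p.2).length
  exact ⟨x, y, h.symm⟩

lemma one_le_maxLen [Nontrivial V] (Γ : ∀ x y : V, G.Walk x y) : 1 ≤ maxLen G Γ := by
  obtain ⟨x, y, hxy⟩ := exists_pair_ne V
  have hpos : (Γ x y).length ≠ 0 := fun h => hxy (Walk.eq_of_length_eq_zero h)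
  have := length_le_maxLen Γ x y
  omega

lemma card_mul_card_compl_le_bottleneck [DecidableEq V] [DecidableRel G.Adj]
    (Γ : ∀ x y : V, G.Walk x y) (d : G.Dart) (A : Finset V)
    (hA : ∀ d' : G.Dart, d'.fst ∈ A → d'.snd ∉ A → d' = d) :
    #A * #Aᶜ ≤ bottleneck G Γ := by
  have hload : A ×ˢ Aᶜ ⊆ univ.filter fun p : V × V => d ∈ (Γ p.1 p.2).darts := by
    rintro ⟨x, y⟩ hxy
    rw [mem_product, mem_compl] at hxy
    obtain ⟨d', hd', hfst, hsnd⟩ := (Γ x y).exists_boundary_dart A hxy.1 hxy.2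
    simpa [hA d' hfst hsnd] using hd'
  calc #A * #Aᶜ = #(A ×ˢ Aᶜ) := (card_product _ _).symm
    _ ≤ _ := card_le_card hload
    _ ≤ bottleneck G Γ :=
      le_sup (f := fun d : G.Dart => #(univ.filter fun p : V × V => d ∈ (Γ p.1 p.2).darts))
        (mem_univ d)

end Routing

lemma mul_add_le_four_mul {L a c : ℕ} (ha : L ≤ 2 * a) (hc : L ≤ 2 * c) :
    L * (a + c) ≤ 4 * (a * c) := by
  nlinarith

/-- If `G` is a tree on `n > 2` vertices (so `|E| = n−1` and
maximal degree `d ≥ 2`), then for the unique routing along the tree,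
`d²b > γ*|E|`. -/
theorem stmt9 {V : Type*} [Fintype V] [DecidableEq V] (G : SimpleGraph V)
    [DecidableRel G.Adj] (htree : G.IsTree) (hn : 2 < Fintype.card V)
    (Γ : ∀ x y : V, G.Walk x y) (hpath : ∀ x y, (Γ x y).IsPath) :
    maxLen G Γ * G.edgeFinset.card < G.maxDegree ^ 2 * bottleneck G Γ := by
  have : Nontrivial V := Fintype.one_lt_card_iff_nontrivial.mp (by omega)
  obtain ⟨x, y, hxy⟩ := exists_length_eq_maxLen Γ
  have hL := one_le_maxLen Γ
  set L := maxLen G Γ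
  -- cutting at the middle edge leaves at least `L / 2` path vertices on each side
  obtain ⟨u, v, q, huv, r, hsplit, hq⟩ := (Γ x y).exists_eq_append_cons (j := L / 2) (by omega)
  have hlen : q.length + r.length + 1 = L := by
    rw [← hxy, hsplit, Walk.length_append, Walk.length_cons]; ring
  obtain ⟨A, hA, hAc, hcut⟩ := htree.isAcyclic.exists_cut_of_isPath (hsplit ▸ hpath x y)
  have hcard : #A + #Aᶜ = #G.edgeFinset + 1 := by
    rw [card_add_card_compl, htree.card_edgeFinset]
  have hd := htree.two_le_maxDegree hn
  calc L * #G.edgeFinset < L * (#A + #Aᶜ) := by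
        rw [hcard]
        exact Nat.mul_lt_mul_of_pos_left (by omega) hL
    _ ≤ 4 * (#A * #Aᶜ) := mul_add_le_four_mul (by omega) (by omega)
    _ ≤ G.maxDegree ^ 2 * bottleneck G Γ :=
      Nat.mul_le_mul (by nlinarith) (card_mul_card_compl_le_bottleneck Γ _ A hcut)
end

section
/- For any simple connected graph G with at least 3 vertices and any spanning tree T of G, the routing Γ(T) along T satisfies d²b > γ*|E|, where d is the maximal degree of G, b the bottleneck number of Γ(T), γ* its longest path length, and |E| the number of edges of G. -/
open Finset SimpleGraph

/-!
The edge in the middle of a longest path of `T` separates at least `⌊γ*/2⌋ + 1` vertices from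
at least `⌈γ*/2⌉` others, so `4b ≥ γ*(γ*+2)`; this settles the case `4|E| < d²(γ*+2)`.
Otherwise `2|E| ≤ nd` gives `d(γ*+2) ≤ 2n`, hence `γ*|E| ≤ n(n-d)`. A centroid of `T` has at
most `d` branches, each with at most `n/2` vertices, so some edge separates `F ≥ (n-1)/d`
vertices from `n - F ≥ n/2` others. Thus `2db ≥ n(n-1)`, and `d²b ≥ n(n-1) > n(n-d)` as
`d ≥ 2`.
-/

lemma SimpleGraph.Walk.exists_eq_concat_append_of_lt_length {V : Type*} {G : SimpleGraph V}
    {x y : V} (p : G.Walk x y) {i : ℕ} (hi : i < p.length) :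
    ∃ (u w : V) (h : G.Adj u w) (q : G.Walk x u) (r : G.Walk w y),
      p = (q.concat h).append r ∧ q.length = i := by
  induction p generalizing i with
  | nil => simp at hi
  | @cons a b _ h p ih =>
    cases i with
    | zero => exact ⟨a, b, h, .nil, p, rfl, rfl⟩
    | succ i =>
      obtain ⟨u, w, huw, q, r, rfl, rfl⟩ := ih (by simpa using hi)
      exact ⟨u, w, huw, .cons h q, r, rfl, rfl⟩

lemma mul_add_two_le_four_mul_half (γ : ℕ) :
    γ * (γ + 2) ≤ 4 * ((γ / 2 + 1) * (γ - γ / 2)) := by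
  obtain ⟨k, rfl | rfl⟩ := Nat.even_or_odd' γ
  · rw [show 2 * k / 2 = k by omega, show 2 * k - k = k by omega]
    nlinarith
  · rw [show (2 * k + 1) / 2 = k by omega, show 2 * k + 1 - k = k + 1 by omega]
    nlinarith

lemma one_le_maxLen_s11 {V : Type*} [Fintype V] {T : SimpleGraph V} (Γ : ∀ x y : V, T.Walk x y)
    (hV : 1 < Fintype.card V) : 1 ≤ maxLen T Γ := by
  obtain ⟨x, y, hxy⟩ := Fintype.exists_pair_of_one_lt_card hV
  exact (Walk.not_nil_iff_lt_length.1 (Walk.not_nil_of_ne hxy)).trans_le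
    (le_sup (f := fun p : V × V => (Γ p.1 p.2).length) (mem_univ (x, y)))

section TreeRouting

variable {V : Type*} {T : SimpleGraph V}

/-- For a tree `T`, `branch Γ u v` is the vertex set of the component of `T - v` containing
`u`. -/
def branch [Fintype V] [DecidableEq V] (Γ : ∀ x y : V, T.Walk x y) (u v : V) : Finset V :=
  univ.filter fun x => u ∈ (Γ x v).support

lemma mem_branch [Fintype V] [DecidableEq V] {Γ : ∀ x y : V, T.Walk x y} {u v x : V} :
    x ∈ branch Γ u v ↔ u ∈ (Γ x v).support := by
  simp [branch]

variable {Γ : ∀ x y : V, T.Walk x y} (hT : T.IsAcyclic) (hΓ : ∀ x y, (Γ x y).IsPath)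
include hT hΓ

lemma eq_routing_of_isPath {a b : V} {p : T.Walk a b} (hp : p.IsPath) : p = Γ a b :=
  congrArg Subtype.val ((hT.subsingleton_path a b).elim ⟨p, hp⟩ ⟨Γ a b, hΓ a b⟩)

lemma routing_eq_concat_of_notMem {u v x : V} (h : T.Adj u v) (hv : v ∉ (Γ x u).support) :
    Γ x v = (Γ x u).concat h :=
  (eq_routing_of_isPath hT hΓ ((hΓ x u).concat hv h)).symm

variable [DecidableEq V]

lemma routing_eq_concat_of_mem {u v x : V} (h : T.Adj u v) (hu : u ∈ (Γ x v).support) :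
    Γ x v = (Γ x u).concat h := by
  have htake : (Γ x v).takeUntil u hu = Γ x u :=
    eq_routing_of_isPath hT hΓ ((hΓ x v).takeUntil hu)
  have hdrop : (Γ x v).dropUntil u hu = h.toWalk :=
    (eq_routing_of_isPath hT hΓ ((hΓ x v).dropUntil hu)).trans
      (eq_routing_of_isPath hT hΓ (Walk.IsPath.of_adj h)).symm
  rw [← (Γ x v).take_spec hu, htake, hdrop, Walk.concat_eq_append]

variable [Fintype V]

lemma mem_branch_iff_notMem {u v x : V} (h : T.Adj u v) :
    x ∈ branch Γ u v ↔ v ∉ (Γ x u).support := by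
  rw [mem_branch]
  refine ⟨fun hu => ?_, fun hv => ?_⟩
  · have hp := hΓ x v
    rw [routing_eq_concat_of_mem hT hΓ h hu] at hp
    exact ((Walk.concat_isPath_iff h).1 hp).2
  · rw [routing_eq_concat_of_notMem hT hΓ h hv, Walk.support_concat]
    exact List.mem_append_left _ (Γ x u).end_mem_support

lemma branch_swap_eq_compl {u v : V} (h : T.Adj u v) : branch Γ v u = (branch Γ u v)ᶜ := by
  ext x
  rw [mem_compl, mem_branch_iff_notMem hT hΓ h, mem_branch, not_not]

lemma card_branch_add_card_branch {u v : V} (h : T.Adj u v) :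
    #(branch Γ u v) + #(branch Γ v u) = Fintype.card V := by
  rw [branch_swap_eq_compl hT hΓ h, card_add_card_compl]

lemma dart_mem_darts_of_mem_branch {u v x y : V} (h : T.Adj u v) (hx : x ∈ branch Γ u v)
    (hy : y ∈ branch Γ v u) : ⟨(u, v), h⟩ ∈ (Γ x y).darts := by
  have huy : u ∉ (Γ y v).support := (mem_branch_iff_notMem hT hΓ h.symm).1 hy
  by_cases hu : u ∈ (Γ x y).support
  · have hcons : (Γ x y).dropUntil u hu = Walk.cons h (Γ y v).reverse :=
      (eq_routing_of_isPath hT hΓ ((hΓ x y).dropUntil hu)).trans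
        (eq_routing_of_isPath hT hΓ ((hΓ y v).reverse.cons (by simpa using huy))).symm
    apply (Γ x y).darts_dropUntil_subset_darts hu
    rw [hcons, Walk.darts_cons]
    exact List.mem_cons_self
  · -- `u` lies on `Γ x v`, the bypass of `Γ x y ++ Γ y v`, but on neither piece
    have hbypass : ((Γ x y).append (Γ y v)).bypass = Γ x v :=
      eq_routing_of_isPath hT hΓ (Walk.bypass_isPath _)
    have hux := Walk.support_bypass_subset_support _ (hbypass ▸ mem_branch.1 hx)
    rw [Walk.mem_support_append_iff] at hux
    rcases hux with hux | hux
    exacts [absurd hux hu, absurd hux huy]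

lemma length_add_one_le_card_branch {x u w : V} {q : T.Walk x u} (h : T.Adj u w)
    (hq : (q.concat h).IsPath) : q.length + 1 ≤ #(branch Γ u w) := by
  obtain ⟨hqpath, hwq⟩ := (Walk.concat_isPath_iff h).1 hq
  have hsub : q.support.toFinset ⊆ branch Γ u w := by
    intro z hz
    rw [List.mem_toFinset] at hz
    rw [mem_branch_iff_notMem hT hΓ h, ← eq_routing_of_isPath hT hΓ (hqpath.dropUntil hz)]
    exact fun hw => hwq (q.support_dropUntil_subset_support hz hw)
  calc q.length + 1 = #q.support.toFinset := by
        rw [List.toFinset_card_of_nodup hqpath.support_nodup, Walk.length_support]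
    _ ≤ #(branch Γ u w) := card_le_card hsub

variable [DecidableRel T.Adj]

lemma card_branch_mul_card_branch_le_bottleneck {u v : V} (h : T.Adj u v) :
    #(branch Γ u v) * #(branch Γ v u) ≤ bottleneck T Γ := by
  refine le_trans ?_ (le_sup (mem_univ (⟨(u, v), h⟩ : T.Dart)))
  rw [← card_product]
  refine card_le_card fun p hp => ?_
  rw [mem_product] at hp
  exact mem_filter.2 ⟨mem_univ _, dart_mem_darts_of_mem_branch hT hΓ h hp.1 hp.2⟩

lemma succ_mul_sub_le_bottleneck (x y : V) {i : ℕ}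
    (hi : i < (Γ x y).length) : (i + 1) * ((Γ x y).length - i) ≤ bottleneck T Γ := by
  obtain ⟨u, w, h, q, r, hqr, rfl⟩ := (Γ x y).exists_eq_concat_append_of_lt_length hi
  have hlen : (Γ x y).length = q.length + 1 + r.length := by
    rw [hqr, Walk.length_append, Walk.length_concat]
  have hrev : (Γ x y).reverse = (r.reverse.concat h.symm).append q.reverse := by
    rw [hqr]
    simp [Walk.reverse_append, Walk.concat_eq_append, ← Walk.append_assoc]
  have hpre := hΓ x y
  rw [hqr] at hpre
  have hsuf := (hΓ x y).reverse
  rw [hrev] at hsuf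
  have hq := length_add_one_le_card_branch hT hΓ h hpre.of_append_left
  have hr := length_add_one_le_card_branch hT hΓ h.symm hsuf.of_append_left
  rw [Walk.length_reverse] at hr
  calc (q.length + 1) * ((Γ x y).length - q.length)
      ≤ #(branch Γ u w) * #(branch Γ w u) := Nat.mul_le_mul hq (by omega)
    _ ≤ bottleneck T Γ := card_branch_mul_card_branch_le_bottleneck hT hΓ h

lemma maxLen_mul_le_four_mul_bottleneck :
    maxLen T Γ * (maxLen T Γ + 2) ≤ 4 * bottleneck T Γ := by
  obtain hγ | hγ := Nat.eq_zero_or_pos (maxLen T Γ)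
  · simp [hγ]
  have hne : (univ : Finset (V × V)).Nonempty :=
    nonempty_of_ne_empty fun h => by simp [maxLen, h] at hγ
  obtain ⟨⟨x, y⟩, -, hxy⟩ := exists_mem_eq_sup _ hne fun p : V × V => (Γ p.1 p.2).length
  change maxLen T Γ = (Γ x y).length at hxy
  rw [hxy] at hγ ⊢
  have hmid := succ_mul_sub_le_bottleneck hT hΓ x y (i := (Γ x y).length / 2) (by omega)
  exact (mul_add_two_le_four_mul_half _).trans (by omega)

lemma sum_card_branch_add_one (u : V) :
    ∑ w ∈ T.neighborFinset u, #(branch Γ w u) + 1 = Fintype.card V := by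
  have hunion : (T.neighborFinset u).biUnion (branch Γ · u) = univ.erase u := by
    ext x
    simp only [mem_biUnion, mem_neighborFinset, mem_branch, mem_erase, mem_univ, and_true]
    constructor
    · rintro ⟨w, huw, hw⟩ rfl
      rw [← eq_routing_of_isPath hT hΓ Walk.IsPath.nil, Walk.support_nil,
        List.mem_singleton] at hw
      exact huw.ne hw.symm
    · intro hxu
      have hnil : ¬ (Γ x u).Nil := Walk.not_nil_of_ne hxu
      exact ⟨_, (Walk.adj_penultimate hnil).symm, Walk.getVert_mem_support _ _⟩
  have hdisj : (T.neighborFinset u : Set V).PairwiseDisjoint (branch Γ · u) := by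
    intro w hw w' hw' hne
    refine Finset.disjoint_left.2 fun x hxw hxw' => ?_
    rw [mem_branch] at hxw hxw'
    rw [coe_neighborFinset, mem_neighborSet] at hw hw'
    exact hne ((hT.eq_penultimate_of_adj_end (hΓ x u) hw hxw).trans
      (hT.eq_penultimate_of_adj_end (hΓ x u) hw' hxw').symm)
  rw [← card_biUnion hdisj, hunion, card_erase_add_one (mem_univ u), card_univ]

lemma exists_forall_adj_two_mul_card_branch_le [Nonempty V] :
    ∃ u, ∀ w, T.Adj w u → 2 * #(branch Γ w u) ≤ Fintype.card V := by
  set heavy := univ.filter fun e : T.Dart => Fintype.card V < 2 * #(branch Γ e.fst e.snd)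
  by_cases hne : heavy.Nonempty
  · -- the tail of a heavy dart with the smallest branch is a centroid
    obtain ⟨e, he, hmin⟩ := exists_min_image heavy (fun e => #(branch Γ e.fst e.snd)) hne
    refine ⟨e.fst, fun w hw => not_lt.1 fun hheavy => ?_⟩
    have hsplit := card_branch_add_card_branch hT hΓ e.adj
    have he' : Fintype.card V < 2 * #(branch Γ e.fst e.snd) := (mem_filter.1 he).2
    obtain rfl | hwv := eq_or_ne w e.snd
    · omega
    · have hle := hmin ⟨(w, e.fst), hw⟩ (mem_filter.2 ⟨mem_univ _, hheavy⟩)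
      have hpair : {w, e.snd} ⊆ T.neighborFinset e.fst := by
        simp [insert_subset_iff, hw.symm, e.adj]
      have hsum := sum_card_branch_add_one hT hΓ e.fst
      have hpair_le : #(branch Γ w e.fst) + #(branch Γ e.snd e.fst) ≤
          ∑ z ∈ T.neighborFinset e.fst, #(branch Γ z e.fst) :=
        (sum_pair (f := fun z => #(branch Γ z e.fst)) hwv).symm.trans_le
          (sum_le_sum_of_subset hpair)
      dsimp only at hle
      omega
  · exact ⟨Classical.arbitrary V, fun w hw =>
      not_lt.1 fun h => hne ⟨⟨(w, _), hw⟩, by simpa [heavy] using h⟩⟩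

lemma exists_adj_branch_balanced (hV : 2 ≤ Fintype.card V) {D : ℕ}
    (hD : ∀ u, T.degree u ≤ D) :
    ∃ w u, T.Adj w u ∧ Fintype.card V ≤ D * #(branch Γ w u) + 1 ∧
      2 * #(branch Γ w u) ≤ Fintype.card V := by
  have : Nonempty V := Fintype.card_pos_iff.1 (by omega)
  obtain ⟨u, hu⟩ := exists_forall_adj_two_mul_card_branch_le hT hΓ
  have hsum := sum_card_branch_add_one hT hΓ u
  have hne : (T.neighborFinset u).Nonempty := by
    rw [nonempty_iff_ne_empty]
    intro hempty
    rw [hempty, sum_empty] at hsum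
    omega
  obtain ⟨w, hw, hmax⟩ := exists_max_image _ (fun w => #(branch Γ w u)) hne
  have hwu := ((mem_neighborFinset _ _ _).1 hw).symm
  refine ⟨w, u, hwu, ?_, hu w hwu⟩
  calc Fintype.card V = ∑ z ∈ T.neighborFinset u, #(branch Γ z u) + 1 := hsum.symm
    _ ≤ T.degree u * #(branch Γ w u) + 1 := by
        rw [← card_neighborFinset_eq_degree, ← smul_eq_mul]
        gcongr
        exact sum_le_card_nsmul _ _ _ hmax
    _ ≤ D * #(branch Γ w u) + 1 := by gcongr; exact hD u

lemma card_mul_pred_le_two_mul_bottleneck {D : ℕ} (hD : ∀ u, T.degree u ≤ D) :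
    Fintype.card V * (Fintype.card V - 1) ≤ 2 * D * bottleneck T Γ := by
  obtain hV | hV := lt_or_ge (Fintype.card V) 2
  · interval_cases Fintype.card V <;> simp
  obtain ⟨w, u, hwu, hlarge, hsmall⟩ := exists_adj_branch_balanced hT hΓ hV hD
  have hb := card_branch_mul_card_branch_le_bottleneck hT hΓ hwu
  have hsplit := card_branch_add_card_branch hT hΓ hwu
  set n := Fintype.card V
  set F := #(branch Γ w u)
  rw [show #(branch Γ u w) = n - F by omega] at hb
  calc n * (n - 1) ≤ (2 * (n - F)) * (D * F) := Nat.mul_le_mul (by omega) (by omega)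
    _ = 2 * D * (F * (n - F)) := by ring
    _ ≤ 2 * D * bottleneck T Γ := by gcongr

end TreeRouting

lemma mul_lt_sq_mul_of_bottleneck_bounds {n m d γ b : ℕ} (hn : 3 ≤ n) (hγ : 1 ≤ γ)
    (hm : n ≤ m + 1) (hdeg : 2 * m ≤ n * d) (hlong : γ * (γ + 2) ≤ 4 * b)
    (hcentroid : n * (n - 1) ≤ 2 * d * b) : γ * m < d ^ 2 * b := by
  have hd : 2 ≤ d := by
    by_contra! h
    interval_cases d <;> omega
  obtain hshort | hshort := lt_or_ge (4 * m) (d ^ 2 * (γ + 2))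
  · nlinarith [Nat.mul_le_mul_left (d ^ 2) hlong]
  · have hdγ : d * (γ + 2) ≤ 2 * n :=
      Nat.le_of_mul_le_mul_left (by nlinarith) (by omega : 0 < d)
    zify [(by omega : 1 ≤ n)] at hcentroid
    nlinarith

theorem stmt11_general {V : Type*} [Fintype V] [DecidableEq V] (G : SimpleGraph V)
    [DecidableRel G.Adj] (hn : 3 ≤ Fintype.card V)
    (T : SimpleGraph V) [DecidableRel T.Adj] (hT : T ≤ G) (htree : T.IsTree)
    (Γ : ∀ x y : V, T.Walk x y) (hpath : ∀ x y, (Γ x y).IsPath) :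
    maxLen T Γ * G.edgeFinset.card < G.maxDegree ^ 2 * bottleneck T Γ := by
  have hspanning : Fintype.card V ≤ #G.edgeFinset + 1 := by
    rw [← htree.card_edgeFinset]
    gcongr
  have hdeg : 2 * #G.edgeFinset ≤ Fintype.card V * G.maxDegree := by
    rw [← sum_degrees_eq_twice_card_edges, ← card_univ, ← smul_eq_mul]
    exact sum_le_card_nsmul _ _ _ fun v _ => G.degree_le_maxDegree v
  exact mul_lt_sq_mul_of_bottleneck_bounds hn (one_le_maxLen_s11 Γ (by omega)) hspanning hdeg
    (maxLen_mul_le_four_mul_bottleneck htree.isAcyclic hpath)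
    (card_mul_pred_le_two_mul_bottleneck htree.isAcyclic hpath
      fun u => (degree_le_of_le hT).trans (G.degree_le_maxDegree u))

/-- For any simple connected graph `G` with at least 3 vertices
and any spanning tree `T` of `G`, the routing `Γ(T)` along `T` satisfies
`d²b > γ*|E|`, where `d` is the maximal degree of `G`, `b` the bottleneck
number of `Γ(T)`, `γ*` its longest path length, and `|E|` the number of edges
of `G`. -/
theorem stmt11 {V : Type*} [Fintype V] [DecidableEq V] (G : SimpleGraph V)
    [DecidableRel G.Adj] (hconn : G.Connected) (hn : 3 ≤ Fintype.card V)
    (T : SimpleGraph V) [DecidableRel T.Adj] (hT : T ≤ G) (htree : T.IsTree)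
    (Γ : ∀ x y : V, T.Walk x y) (hpath : ∀ x y, (Γ x y).IsPath) :
    maxLen T Γ * G.edgeFinset.card < G.maxDegree ^ 2 * bottleneck T Γ :=
  stmt11_general G hn T hT htree Γ hpath
end

section
/- If G is a connected graph whose mean geodesic distance (1/n²)Σ_{x,y} dist(x,y) is at least one eighth of its diameter, then for any routing Γ consisting entirely of geodesic paths, 4d²b ≥ γ*|E|. -/
open Finset SimpleGraph

/-!
Geodesic routes are paths, so counting the pairs (route, directed edge on it) gives
`∑ dist = ∑_e load(e) ≤ 2|E| b`. With the hypothesis `D n² ≤ 8 ∑ dist` this is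
`D n² ≤ 16 |E| b`, and multiplying the handshake bound `4|E|² ≤ n² d²` by `D` yields
`4 |E|² D ≤ 16 |E| b d²`.
-/

namespace SimpleGraph

variable {V : Type*} [Fintype V] (G : SimpleGraph V) [DecidableRel G.Adj]

theorem two_mul_card_edgeFinset_le_card_mul_maxDegree :
    2 * #G.edgeFinset ≤ Fintype.card V * G.maxDegree :=
  calc 2 * #G.edgeFinset = ∑ v, G.degree v := G.sum_degrees_eq_twice_card_edges.symm
    _ ≤ ∑ _v : V, G.maxDegree := sum_le_sum fun v _ => G.degree_le_maxDegree v
    _ = Fintype.card V * G.maxDegree := by simp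

variable [DecidableEq V]

def dartLoad (Γ : ∀ x y : V, G.Walk x y) (e : G.Dart) : ℕ :=
  #{p : V × V | e ∈ (Γ p.1 p.2).darts}

theorem dartLoad_le_bottleneck (Γ : ∀ x y : V, G.Walk x y) (e : G.Dart) :
    G.dartLoad Γ e ≤ bottleneck G Γ :=
  le_sup (f := G.dartLoad Γ) (mem_univ e)

theorem sum_length_eq_sum_dartLoad (Γ : ∀ x y : V, G.Walk x y)
    (hΓ : ∀ x y, (Γ x y).IsPath) :
    ∑ p : V × V, (Γ p.1 p.2).length = ∑ e : G.Dart, G.dartLoad Γ e := by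
  simp only [dartLoad, card_filter]
  rw [sum_comm]
  refine sum_congr rfl fun p _ => ?_
  have hnodup := Walk.darts_nodup_of_support_nodup (hΓ p.1 p.2).support_nodup
  rw [sum_boole, ← Walk.length_darts, ← List.toFinset_card_of_nodup hnodup]
  congr 1
  ext e
  simp

theorem sum_length_le_two_mul_card_edgeFinset_mul_bottleneck (Γ : ∀ x y : V, G.Walk x y)
    (hΓ : ∀ x y, (Γ x y).IsPath) :
    ∑ p : V × V, (Γ p.1 p.2).length ≤ 2 * #G.edgeFinset * bottleneck G Γ :=
  calc ∑ p : V × V, (Γ p.1 p.2).length = ∑ e : G.Dart, G.dartLoad Γ e :=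
        G.sum_length_eq_sum_dartLoad Γ hΓ
    _ ≤ ∑ _e : G.Dart, bottleneck G Γ := sum_le_sum fun e _ => G.dartLoad_le_bottleneck Γ e
    _ = 2 * #G.edgeFinset * bottleneck G Γ := by
        rw [sum_const, card_univ, dart_card_eq_twice_card_edges, smul_eq_mul]

end SimpleGraph

theorem mul_sq_le_of_div_le_div_sq {a s n c : ℕ} (hc : 0 < c)
    (h : (a : ℚ) / c ≤ (s : ℚ) / (n : ℚ) ^ 2) : a * n ^ 2 ≤ c * s := by
  rcases n.eq_zero_or_pos with rfl | hn
  · simp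
  · rw [div_le_div_iff₀ (by exact_mod_cast hc) (by positivity), mul_comm (s : ℚ)] at h
    exact_mod_cast h

theorem mul_le_of_mul_sq_le {D n E b d : ℕ} (hD : D * n ^ 2 ≤ 16 * E * b)
    (hE : 2 * E ≤ n * d) : D * E ≤ 4 * d ^ 2 * b := by
  rcases E.eq_zero_or_pos with rfl | hEpos
  · simp
  refine Nat.le_of_mul_le_mul_right ?_ (by omega : 0 < 4 * E)
  calc D * E * (4 * E) = D * (2 * E) ^ 2 := by ring
    _ ≤ D * (n * d) ^ 2 := by gcongr
    _ = D * n ^ 2 * d ^ 2 := by ring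
    _ ≤ 16 * E * b * d ^ 2 := by gcongr
    _ = 4 * d ^ 2 * b * (4 * E) := by ring

theorem stmt19_general {V : Type*} [Fintype V] [DecidableEq V] (G : SimpleGraph V)
    [DecidableRel G.Adj]
    (hmean : ((Finset.univ.sup fun p : V × V => G.dist p.1 p.2 : ℕ) : ℚ) / 8 ≤
      (∑ p : V × V, (G.dist p.1 p.2 : ℚ)) / (Fintype.card V : ℚ) ^ 2)
    (Γ : ∀ x y : V, G.Walk x y)
    (hgeo : ∀ x y : V, (Γ x y).length = G.dist x y) :
    maxLen G Γ * G.edgeFinset.card ≤ 4 * G.maxDegree ^ 2 * bottleneck G Γ := by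
  have hmaxLen : maxLen G Γ = univ.sup fun p : V × V => G.dist p.1 p.2 :=
    sup_congr rfl fun p _ => hgeo p.1 p.2
  have hsum : ∑ p : V × V, G.dist p.1 p.2 ≤ 2 * #G.edgeFinset * bottleneck G Γ := by
    simpa only [hgeo] using G.sum_length_le_two_mul_card_edgeFinset_mul_bottleneck Γ
      fun x y => (Γ x y).isPath_of_length_eq_dist (hgeo x y)
  have hdiam : (univ.sup fun p : V × V => G.dist p.1 p.2) * Fintype.card V ^ 2 ≤
      8 * ∑ p : V × V, G.dist p.1 p.2 :=
    mul_sq_le_of_div_le_div_sq (by norm_num) (by exact_mod_cast hmean)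
  rw [hmaxLen]
  exact mul_le_of_mul_sq_le (by linarith) G.two_mul_card_edgeFinset_le_card_mul_maxDegree

/-- If `G` is a connected graph whose mean geodesic distance
`(1/n²)Σ_{x,y} dist(x,y)` is at least one eighth of its diameter
`D = max_{x,y} dist(x,y)`, then for any routing `Γ` consisting entirely of
geodesic paths, `4d²b ≥ γ*|E|`. -/
theorem stmt19 {V : Type*} [Fintype V] [DecidableEq V] (G : SimpleGraph V)
    [DecidableRel G.Adj] (hconn : G.Connected)
    (hmean : ((Finset.univ.sup fun p : V × V => G.dist p.1 p.2 : ℕ) : ℚ) / 8 ≤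
      (∑ p : V × V, (G.dist p.1 p.2 : ℚ)) / (Fintype.card V : ℚ) ^ 2)
    (Γ : ∀ x y : V, G.Walk x y)
    (hgeo : ∀ x y : V, (Γ x y).length = G.dist x y) :
    maxLen G Γ * G.edgeFinset.card ≤ 4 * G.maxDegree ^ 2 * bottleneck G Γ :=
  stmt19_general G hmean Γ hgeo
end
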